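/- arXiv:nlin/0005051 — 5 statements merged into one kernel-verified Lean document; each statement's English description precedes it below -/
import Mathlib

section
/- Let b be a real number, let R : ℝ → ℝ be an even function with R(t) > 0 for all t, and let Θ : ℝ → ℝ be an odd function, and assume t ↦ 1/R(t) + b/R(t)² is integrable on ℝ. Define M₂(θ₀) = ∫_{-∞}^{∞} sin(2(Θ(t)+θ₀))·(1/R(t) + b/R(t)²) dt and I₂ = ∫_{-∞}^{∞} cos(2Θ(t))·(1/R(t) + b/R(t)²) dt. Then M₂(θ₀) = I₂ · sin(2θ₀) for every θ₀ ∈ ℝ; in particular, if I₂ ≠ 0, then M₂ vanishes at θ₀ = kπ/2 for every integer k, and at each such point the derivative of M₂ is nonzero (equal to ±2I₂), so these zeros are simple. -/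
open MeasureTheory Real

/-- The second Melnikov integral of the weakly anisotropic Manev problem
satisfies `M₂ θ₀ = I₂ sin 2θ₀`; in particular if `I₂ ≠ 0` then `M₂` has
simple zeros at the points `kπ/2`, `k ∈ ℤ`. -/
theorem melnikov_M2_simple_zeros (b : ℝ) (R Θ : ℝ → ℝ)
    (hReven : ∀ t, R (-t) = R t) (hRpos : ∀ t, 0 < R t)
    (hΘodd : ∀ t, Θ (-t) = -Θ t) (hΘmeas : Measurable Θ)
    (hint : Integrable (fun t => 1 / R t + b / (R t) ^ 2))
    (M₂ : ℝ → ℝ) (I₂ : ℝ)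
    (hM₂ : ∀ θ₀, M₂ θ₀ = ∫ t, Real.sin (2 * (Θ t + θ₀)) * (1 / R t + b / (R t) ^ 2))
    (hI₂ : I₂ = ∫ t, Real.cos (2 * Θ t) * (1 / R t + b / (R t) ^ 2)) :
    (∀ θ₀, M₂ θ₀ = I₂ * Real.sin (2 * θ₀)) ∧
      (I₂ ≠ 0 → ∀ k : ℤ,
        M₂ (k * Real.pi / 2) = 0 ∧
        deriv M₂ (k * Real.pi / 2) = 2 * I₂ * (-1 : ℝ) ^ k ∧
        deriv M₂ (k * Real.pi / 2) ≠ 0) := by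
  set f : ℝ → ℝ := fun t => 1 / R t + b / (R t) ^ 2 with hf
  have hsin_int : Integrable (fun t => Real.sin (2 * Θ t) * f t) := by
    have := hint.bdd_mul (c := 1) ((Real.measurable_sin.comp
      (hΘmeas.const_mul 2)).aestronglyMeasurable)
      (Filter.Eventually.of_forall fun t => by simpa using Real.abs_sin_le_one (2 * Θ t))
    exact this
  have hcos_int : Integrable (fun t => Real.cos (2 * Θ t) * f t) := by
    have := hint.bdd_mul (c := 1) ((Real.measurable_cos.comp
      (hΘmeas.const_mul 2)).aestronglyMeasurable)
      (Filter.Eventually.of_forall fun t => by simpa using Real.abs_cos_le_one (2 * Θ t))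
    exact this
  have hodd : (∫ t, Real.sin (2 * Θ t) * f t) = 0 := by
    have h1 : (∫ t, Real.sin (2 * Θ (-t)) * f (-t)) = ∫ t, Real.sin (2 * Θ t) * f t :=
      MeasureTheory.integral_neg_eq_self (fun t => Real.sin (2 * Θ t) * f t) volume
    have h2 : (fun t => Real.sin (2 * Θ (-t)) * f (-t)) =
        fun t => -(Real.sin (2 * Θ t) * f t) := by
      funext t
      simp [hf, hΘodd t, hReven t, mul_neg, Real.sin_neg, neg_mul]
    rw [h2, integral_neg] at h1
    linarith
  have hmain : ∀ θ₀, M₂ θ₀ = I₂ * Real.sin (2 * θ₀) := by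
    intro θ₀
    have hexp : (fun t => Real.sin (2 * (Θ t + θ₀)) * f t) =
        fun t => Real.cos (2 * θ₀) * (Real.sin (2 * Θ t) * f t)
          + Real.sin (2 * θ₀) * (Real.cos (2 * Θ t) * f t) := by
      funext t
      have : Real.sin (2 * (Θ t + θ₀)) = Real.sin (2 * Θ t + 2 * θ₀) := by ring_nf
      rw [this, Real.sin_add]
      ring
    rw [hM₂ θ₀]
    show (∫ t, Real.sin (2 * (Θ t + θ₀)) * f t) = I₂ * Real.sin (2 * θ₀)
    rw [hexp, integral_add (hsin_int.const_mul _) (hcos_int.const_mul _),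
      integral_const_mul, integral_const_mul, hodd, hI₂]
    show Real.cos (2 * θ₀) * 0 + Real.sin (2 * θ₀) * (∫ t, Real.cos (2 * Θ t) * f t)
      = (∫ t, Real.cos (2 * Θ t) * f t) * Real.sin (2 * θ₀)
    ring
  refine ⟨hmain, fun hI k => ?_⟩
  have hMfun : M₂ = fun θ₀ => I₂ * Real.sin (2 * θ₀) := funext hmain
  have hx : (2 : ℝ) * ((k : ℝ) * Real.pi / 2) = (k : ℝ) * Real.pi := by ring
  have hsin0 : Real.sin (2 * ((k : ℝ) * Real.pi / 2)) = 0 := by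
    rw [hx]; exact Real.sin_int_mul_pi k
  have hcos : Real.cos (2 * ((k : ℝ) * Real.pi / 2)) = (-1 : ℝ) ^ k := by
    rw [hx]
    have := Real.cos_add_int_mul_pi 0 k
    simpa using this
  have hderiv : ∀ x : ℝ, HasDerivAt M₂ (I₂ * (2 * Real.cos (2 * x))) x := by
    intro x
    rw [hMfun]
    have h1 : HasDerivAt (fun y : ℝ => 2 * y) 2 x := by
      simpa using (hasDerivAt_id x).const_mul 2
    have h2 : HasDerivAt (fun y : ℝ => Real.sin (2 * y)) (Real.cos (2 * x) * 2) x :=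
      (Real.hasDerivAt_sin (2 * x)).comp x h1
    have := h2.const_mul I₂
    simpa [mul_comm, mul_assoc, mul_left_comm] using this
  refine ⟨by rw [hmain, hsin0, mul_zero], ?_, ?_⟩
  · rw [(hderiv _).deriv, hcos]; ring
  · rw [(hderiv _).deriv, hcos]
    intro h
    have : (-1 : ℝ) ^ k ≠ 0 := zpow_ne_zero k (by norm_num)
    have hI2 : I₂ * (2 * (-1 : ℝ) ^ k) ≠ 0 := by
      exact mul_ne_zero hI (mul_ne_zero two_ne_zero this)
    exact hI2 h
end

section
/- Let h < 0 and C > 0 with C < 1/(−2h), and let r₋ < r₊ be the two (positive) roots of the quadratic equation 2hr² + 2r − C = 0, i.e. r∓ = (1 ∓ √(1 + 2hC))/(−2h). Then (1/π) · ∫_{r₋}^{r₊} √(2h + 2/r − C/r²) dr = 1/√(−2h) − √C. -/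
open Real

set_option maxHeartbeats 1000000

/-- Evaluation of the radial action integral of the isotropic Manev problem:
for `h < 0` and `0 < C < 1/(−2h)`, with turning points
`r∓ = (1 ∓ √(1 + 2hC))/(−2h)`,
`(1/π) ∫_{r₋}^{r₊} √(2h + 2/r − C/r²) dr = 1/√(−2h) − √C`. -/
theorem manev_action_integral (h C : ℝ) (hh : h < 0) (hC : 0 < C)
    (hC' : C < 1 / (-2 * h)) (rm rp : ℝ)
    (hrm : rm = (1 - Real.sqrt (1 + 2 * h * C)) / (-2 * h))
    (hrp : rp = (1 + Real.sqrt (1 + 2 * h * C)) / (-2 * h)) :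
    (1 / Real.pi) * ∫ r in rm..rp, Real.sqrt (2 * h + 2 / r - C / r ^ 2)
      = 1 / Real.sqrt (-2 * h) - Real.sqrt C := by
  have hb : (0:ℝ) < -2 * h := by linarith
  set D : ℝ := Real.sqrt (1 + 2 * h * C) with hDdef
  have hCb : C * (-2 * h) < 1 := (lt_div_iff₀ hb).mp hC'
  have hdisc : 0 < 1 + 2 * h * C := by nlinarith
  have hdisc1 : 1 + 2 * h * C < 1 := by nlinarith
  have hD0 : 0 < D := Real.sqrt_pos.mpr hdisc
  have hD1 : D < 1 := by
    have : D < Real.sqrt 1 := Real.sqrt_lt_sqrt hdisc.le hdisc1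
    simpa using this
  have hD2 : D ^ 2 = 1 + 2 * h * C := Real.sq_sqrt hdisc.le
  have hne : h ≠ 0 := ne_of_lt hh
  have h1 : 2 * h * rm = D - 1 := by
    rw [hrm]; field_simp; ring
  have h2 : 2 * h * rp = -(1 + D) := by
    rw [hrp]; field_simp
  have hrm0 : 0 < rm := by
    rw [hrm]; exact div_pos (by linarith) hb
  have hlt : rm < rp := by nlinarith
  have hrp0 : 0 < rp := lt_trans hrm0 hlt
  have key : ∀ r : ℝ, 2*h*r^2 + 2*r - C = 2*h*(r - rm)*(r - rp) := by
    intro r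
    have e : (2*h*rm)*(2*h*rp) = (D-1)*(-(1+D)) := by rw [h1, h2]
    have hne : (2*h : ℝ) ≠ 0 := by linarith
    have hprod : 2*h*(rm*rp) = -C := by
      apply mul_left_cancel₀ hne
      linear_combination e - hD2
    linear_combination r*h1 + r*h2 - hprod
  set sb : ℝ := Real.sqrt (-2*h) with hsbdef
  have hsb0 : 0 < sb := Real.sqrt_pos.mpr (by linarith)
  have hsb2 : sb ^ 2 = -2*h := Real.sq_sqrt (by linarith)
  set sC : ℝ := Real.sqrt C with hsCdef
  have hsC0 : 0 < sC := Real.sqrt_pos.mpr hC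
  have hsC2 : sC ^ 2 = C := Real.sq_sqrt hC.le
  set F : ℝ → ℝ := fun r => Real.sqrt (2*h*r^2 + 2*r - C)
      - (1 / sb) * Real.arcsin ((2*h*r + 1)/D)
      - sC * Real.arcsin ((r - C)/(r*D)) with hF
  have hderiv : ∀ r ∈ Set.Ioo rm rp,
      HasDerivAt F (Real.sqrt (2 * h + 2 / r - C / r ^ 2)) r := by
    intro r hr
    obtain ⟨hr1, hr2⟩ := hr
    have hr0 : 0 < r := lt_trans hrm0 hr1
    have hQ : 0 < 2*h*r^2 + 2*r - C := by
      rw [key r]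
      nlinarith [mul_pos (mul_pos hb (sub_pos.mpr hr1)) (sub_pos.mpr hr2)]
    set Q : ℝ := 2*h*r^2 + 2*r - C with hQdef
    set sQ : ℝ := Real.sqrt Q with hsQdef
    have hsQ0 : 0 < sQ := Real.sqrt_pos.mpr hQ
    have hsQ2 : sQ ^ 2 = Q := Real.sq_sqrt hQ.le
    have e1 : D^2 - (2*h*r+1)^2 = (-2*h)*Q := by
      rw [hQdef]; linear_combination hD2
    have e2 : (r*D)^2 - (r-C)^2 = C*Q := by
      rw [hQdef]; linear_combination r^2*hD2
    have hx1 : ((2*h*r+1)/D)^2 < 1 := by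
      rw [div_pow, div_lt_one (by positivity)]
      nlinarith [mul_pos hb hQ]
    have hx1a : (2*h*r+1)/D ≠ -1 := by
      intro heq; rw [heq] at hx1; norm_num at hx1
    have hx1b : (2*h*r+1)/D ≠ 1 := by
      intro heq; rw [heq] at hx1; norm_num at hx1
    have hx2 : ((r-C)/(r*D))^2 < 1 := by
      rw [div_pow, div_lt_one (by positivity)]
      nlinarith [mul_pos hC hQ]
    have hx2a : (r-C)/(r*D) ≠ -1 := by
      intro heq; rw [heq] at hx2; norm_num at hx2
    have hx2b : (r-C)/(r*D) ≠ 1 := by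
      intro heq; rw [heq] at hx2; norm_num at hx2
    -- derivatives of the three pieces
    have dQ : HasDerivAt (fun r : ℝ => 2*h*r^2 + 2*r - C) (4*h*r + 2) r := by
      have := (((hasDerivAt_pow 2 r).const_mul (2*h)).add
        ((hasDerivAt_id r).const_mul 2)).sub_const C
      refine this.congr_deriv ?_
      ring
    have d1 : HasDerivAt (fun r : ℝ => Real.sqrt (2*h*r^2 + 2*r - C))
        ((4*h*r + 2) / (2 * sQ)) r := by
      simpa using dQ.sqrt (by rw [← hQdef]; exact hQ.ne')
    have d2inner : HasDerivAt (fun r : ℝ => (2*h*r+1)/D) (2*h/D) r := by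
      have := (((hasDerivAt_id r).const_mul (2*h)).add_const 1).div_const D
      refine this.congr_deriv ?_
      ring
    have d2 : HasDerivAt (fun r : ℝ => Real.arcsin ((2*h*r+1)/D))
        ((1 / Real.sqrt (1 - ((2*h*r+1)/D)^2)) * (2*h/D)) r :=
      by have := (Real.hasDerivAt_arcsin hx1a hx1b).comp r d2inner; exact this
    have hrD : r * D ≠ 0 := by positivity
    have d3inner : HasDerivAt (fun r : ℝ => (r - C)/(r*D)) (C/(r^2*D)) r := by
      have := ((hasDerivAt_id r).sub_const C).div
        ((hasDerivAt_id r).mul_const D) hrD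
      refine this.congr_deriv ?_
      simp only [id]
      field_simp
      ring
    have d3 : HasDerivAt (fun r : ℝ => Real.arcsin ((r - C)/(r*D)))
        ((1 / Real.sqrt (1 - ((r-C)/(r*D))^2)) * (C/(r^2*D))) r :=
      by have := (Real.hasDerivAt_arcsin hx2a hx2b).comp r d3inner; exact this
    have dF : HasDerivAt F
        ((4*h*r + 2) / (2 * sQ)
         - (1/sb) * ((1 / Real.sqrt (1 - ((2*h*r+1)/D)^2)) * (2*h/D))
         - sC * ((1 / Real.sqrt (1 - ((r-C)/(r*D))^2)) * (C/(r^2*D)))) r :=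
      (d1.sub (d2.const_mul (1/sb))).sub (d3.const_mul sC)
    convert dF using 1
    -- now the algebraic identity for the derivative value
    have s1 : Real.sqrt (1 - ((2*h*r+1)/D)^2) = sb * sQ / D := by
      rw [show 1 - ((2*h*r+1)/D)^2 = (sb * sQ / D)^2 by
        rw [div_pow, div_pow, mul_pow sb sQ, hsb2, hsQ2, ← e1]
        field_simp]
      exact Real.sqrt_sq (by positivity)
    have s2 : Real.sqrt (1 - ((r-C)/(r*D))^2) = sC * sQ / (r*D) := by
      rw [show 1 - ((r-C)/(r*D))^2 = (sC * sQ / (r*D))^2 by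
        rw [div_pow, div_pow, mul_pow sC sQ, hsC2, hsQ2, ← e2]
        field_simp]
      exact Real.sqrt_sq (by positivity)
    have sfin : Real.sqrt (2 * h + 2 / r - C / r ^ 2) = sQ / r := by
      rw [show 2 * h + 2 / r - C / r ^ 2 = Q / r^2 by rw [hQdef]; field_simp]
      rw [show Q / r^2 = (sQ/r)^2 by rw [div_pow, hsQ2]]
      exact Real.sqrt_sq (by positivity)
    have t2 : 1/sb * (1/(sb*sQ/D) * (2*h/D)) = -(1/sQ) := by
      field_simp
      linear_combination hsb2
    have t3 : sC * (1/(sC*sQ/(r*D)) * (C/(r^2*D))) = C/(r*sQ) := by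
      field_simp
    have hsQ2' : sQ^2 = 2*h*r^2 + 2*r - C := hsQ2.trans hQdef
    rw [sfin, s1, s2, t2, t3]
    field_simp
    linear_combination 2 * hsQ2'
  have hQp : 2*h*rp^2 + 2*rp - C = 0 := by rw [key]; ring
  have hQm : 2*h*rm^2 + 2*rm - C = 0 := by rw [key]; ring
  have hcont : ContinuousOn F (Set.Icc rm rp) := by
    apply ContinuousOn.sub
    apply ContinuousOn.sub
    · exact (Real.continuous_sqrt.comp (by continuity)).continuousOn
    · exact continuousOn_const.mul
        ((Real.continuous_arcsin.comp (by continuity)).continuousOn)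
    · apply continuousOn_const.mul
      apply Real.continuous_arcsin.comp_continuousOn
      apply ContinuousOn.div
      · exact (continuous_id.sub continuous_const).continuousOn
      · exact (continuous_id.mul continuous_const).continuousOn
      · intro x hx
        have : 0 < x := lt_of_lt_of_le hrm0 hx.1
        positivity
  have hint : IntervalIntegrable (fun r => Real.sqrt (2 * h + 2 / r - C / r ^ 2))
      MeasureTheory.volume rm rp := by
    apply ContinuousOn.intervalIntegrable
    apply ContinuousOn.sqrt
    apply ContinuousOn.sub
    · apply ContinuousOn.add continuousOn_const
      apply continuousOn_const.div continuousOn_id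
      intro x hx
      rw [Set.uIcc_of_le hlt.le] at hx
      exact ne_of_gt (lt_of_lt_of_le hrm0 hx.1)
    · apply continuousOn_const.div (continuousOn_id.pow 2)
      intro x hx
      rw [Set.uIcc_of_le hlt.le] at hx
      have : 0 < x := lt_of_lt_of_le hrm0 hx.1
      show x ^ 2 ≠ 0
      positivity
  have ftc := intervalIntegral.integral_eq_sub_of_hasDeriv_right_of_le hlt.le hcont
    (fun x hx => (hderiv x hx).hasDerivWithinAt) hint
  rw [ftc]
  -- evaluate F at the endpoints
  have a1 : (2*h*rp + 1)/D = -1 := by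
    rw [show 2*h*rp + 1 = -D by linarith]
    rw [neg_div, div_self hD0.ne']
  have a2 : (rp - C)/(rp*D) = 1 := by
    rw [show rp - C = rp * D by linear_combination hQp - rp*h2]
    exact div_self (by positivity)
  have a3 : (2*h*rm + 1)/D = 1 := by
    rw [show 2*h*rm + 1 = D by linarith]
    exact div_self hD0.ne'
  have a4 : (rm - C)/(rm*D) = -1 := by
    rw [show rm - C = -(rm * D) by linear_combination hQm - rm*h1]
    rw [neg_div, div_self (by positivity)]
  have Fp : F rp = (1/sb) * (π/2) - sC * (π/2) := by
    rw [hF]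
    simp only [hQp, Real.sqrt_zero, a1, a2, Real.arcsin_neg_one, Real.arcsin_one]
    ring
  have Fm : F rm = -((1/sb) * (π/2)) + sC * (π/2) := by
    rw [hF]
    simp only [hQm, Real.sqrt_zero, a3, a4, Real.arcsin_neg_one, Real.arcsin_one]
    ring
  rw [Fp, Fm]
  have hpi : (π : ℝ) ≠ 0 := Real.pi_ne_zero
  field_simp
  ring
end

section
/- Let b > 0, I > 0 and K with K² > 2b. The determinant of the Hessian matrix of the function H₀(I,K) = −1/(2(I + √(K²−2b))²) with respect to the variables (I,K), i.e. (∂²H₀/∂I²)(∂²H₀/∂K²) − (∂²H₀/∂I∂K)², is positive; in particular H₀ is nondegenerate at every such point (I,K). -/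
open Real Filter

private lemma dF (u : ℝ) (hu : u ≠ 0) :
    HasDerivAt (fun x : ℝ => -1 / (2 * x ^ 2)) ((u ^ 3)⁻¹) u := by
  have hden : HasDerivAt (fun x : ℝ => 2 * x ^ 2) (2 * (↑2 * u ^ 1 * 1)) u :=
    ((hasDerivAt_id u).pow 2).const_mul 2
  have h := (hasDerivAt_const u (-1 : ℝ)).div hden
    (by simp [hu] : (2 : ℝ) * u ^ 2 ≠ 0)
  refine h.congr_deriv ?_
  field_simp
  ring

private lemma dsqrt (b x : ℝ) (hx : 2 * b < x ^ 2) :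
    HasDerivAt (fun y : ℝ => Real.sqrt (y ^ 2 - 2 * b))
      (x / Real.sqrt (x ^ 2 - 2 * b)) x := by
  have h1 : HasDerivAt (fun y : ℝ => y ^ 2 - 2 * b) (2 * x) x := by
    have := ((hasDerivAt_id x).pow 2).sub_const (2 * b)
    simpa using this
  have h2 := (Real.hasDerivAt_sqrt (by nlinarith : x ^ 2 - 2 * b ≠ 0)).comp x h1
  have hs : Real.sqrt (x ^ 2 - 2 * b) ≠ 0 := ne_of_gt (Real.sqrt_pos.mpr (by linarith))
  refine h2.congr_deriv ?_
  field_simp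

private lemma d1I (s x : ℝ) (hx : x + s ≠ 0) :
    HasDerivAt (fun y : ℝ => -1 / (2 * (y + s) ^ 2)) (((x + s) ^ 3)⁻¹) x := by
  have h := (dF (x + s) hx).comp x ((hasDerivAt_id x).add_const s)
  simpa [Function.comp_def] using h

private lemma d1K (b I x : ℝ) (hI : 0 < I) (hx : 2 * b < x ^ 2) :
    HasDerivAt (fun y : ℝ => -1 / (2 * (I + Real.sqrt (y ^ 2 - 2 * b)) ^ 2))
      (((I + Real.sqrt (x ^ 2 - 2 * b)) ^ 3)⁻¹ * (x / Real.sqrt (x ^ 2 - 2 * b))) x := by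
  have hs : 0 ≤ Real.sqrt (x ^ 2 - 2 * b) := Real.sqrt_nonneg _
  have h := (dF (I + Real.sqrt (x ^ 2 - 2 * b)) (by linarith)).comp x
    ((dsqrt b x hx).const_add I)
  simpa [Function.comp_def] using h

/-- Nondegeneracy of the isotropic Manev Hamiltonian in action variables:
the determinant of the Hessian of `H₀(I,K) = −1/(2(I + √(K²−2b))²)` is
positive for `I > 0`, `K² > 2b`. -/
theorem manev_hessian_det_pos (b I K : ℝ) (hb : 0 < b) (hI : 0 < I)
    (hK : 2 * b < K ^ 2)
    (H0 : ℝ → ℝ → ℝ)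
    (hH0 : ∀ I' K' : ℝ, H0 I' K' = -1 / (2 * (I' + Real.sqrt (K' ^ 2 - 2 * b)) ^ 2)) :
    0 < (deriv (fun I' => deriv (fun I'' => H0 I'' K) I') I)
          * (deriv (fun K' => deriv (fun K'' => H0 I K'') K') K)
        - (deriv (fun K' => deriv (fun I' => H0 I' K') I) K) ^ 2 := by
  set s := Real.sqrt (K ^ 2 - 2 * b) with hs_def
  have hs2 : s ^ 2 = K ^ 2 - 2 * b := Real.sq_sqrt (by linarith)
  have hs0 : 0 < s := Real.sqrt_pos.mpr (by linarith)
  have hJ : 0 < I + s := by linarith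
  -- neighborhood facts
  have hevI : ∀ᶠ x : ℝ in nhds I, 0 < x + s := by
    have hc : ContinuousAt (fun x : ℝ => x + s) I := by fun_prop
    exact hc.eventually_mem (isOpen_Ioi.mem_nhds (by simpa using hJ))
  have hevK : ∀ᶠ y : ℝ in nhds K, 2 * b < y ^ 2 := by
    have hc : ContinuousAt (fun y : ℝ => y ^ 2) K := by fun_prop
    exact hc.eventually_mem (isOpen_Ioi.mem_nhds (by simpa using hK))
  -- second I-derivative
  have e1 : (fun I' => deriv (fun I'' => H0 I'' K) I') =ᶠ[nhds I]
      (fun I' => ((I' + s) ^ 3)⁻¹) := by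
    filter_upwards [hevI] with x hx
    simp only [hH0]
    exact (d1I s x hx.ne').deriv
  have hA : deriv (fun I' => deriv (fun I'' => H0 I'' K) I') I
      = -(↑3 * (I + s) ^ 2 * 1) / ((I + s) ^ 3) ^ 2 := by
    rw [e1.deriv_eq]
    exact ((((hasDerivAt_id I).add_const s).pow 3).inv (by exact pow_ne_zero 3 hJ.ne')).deriv
  -- second K-derivative
  have e2 : (fun K' => deriv (fun K'' => H0 I K'') K') =ᶠ[nhds K]
      (fun y => ((I + Real.sqrt (y ^ 2 - 2 * b)) ^ 3)⁻¹ * (y / Real.sqrt (y ^ 2 - 2 * b))) := by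
    filter_upwards [hevK] with y hy
    simp only [hH0]
    exact (d1K b I y hI hy).deriv
  have hφ : HasDerivAt (fun y : ℝ => Real.sqrt (y ^ 2 - 2 * b)) (K / s) K := dsqrt b K hK
  have hpow : HasDerivAt (fun y : ℝ => (I + Real.sqrt (y ^ 2 - 2 * b)) ^ 3)
      (3 * (I + s) ^ 2 * (K / s)) K := by
    simpa [Pi.pow_def] using (hφ.const_add I).pow 3
  have hinv := hpow.inv (by positivity : (I + s) ^ 3 ≠ 0)
  have hquot : HasDerivAt (fun y : ℝ => y / Real.sqrt (y ^ 2 - 2 * b))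
      ((1 * s - K * (K / s)) / s ^ 2) K := (hasDerivAt_id K).div hφ hs0.ne'
  have hC : deriv (fun K' => deriv (fun K'' => H0 I K'') K') K
      = (-(↑3 * (I + s) ^ 2 * (K / s)) / ((I + s) ^ 3) ^ 2) * (K / s)
        + ((I + s) ^ 3)⁻¹ * ((1 * s - K * (K / s)) / s ^ 2) := by
    rw [e2.deriv_eq]
    exact (hinv.mul hquot).deriv
  -- mixed derivative
  have e3 : (fun K' => deriv (fun I' => H0 I' K') I) =ᶠ[nhds K]
      (fun y => ((I + Real.sqrt (y ^ 2 - 2 * b)) ^ 3)⁻¹) := by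
    filter_upwards [hevK] with y hy
    simp only [hH0]
    have hsy : 0 ≤ Real.sqrt (y ^ 2 - 2 * b) := Real.sqrt_nonneg _
    exact (d1I (Real.sqrt (y ^ 2 - 2 * b)) I (by linarith)).deriv
  have hB : deriv (fun K' => deriv (fun I' => H0 I' K') I) K
      = -(↑3 * (I + s) ^ 2 * (K / s)) / ((I + s) ^ 3) ^ 2 := by
    rw [e3.deriv_eq]
    exact hinv.deriv
  rw [hA, hB, hC]
  have h1 : 1 * s - K * (K / s) = -(2 * b) / s := by
    field_simp
    linarith [hs2]
  rw [h1]
  have key : (-(3 * (I + s) ^ 2 * 1) / ((I + s) ^ 3) ^ 2)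
      * ((-(3 * (I + s) ^ 2 * (K / s)) / ((I + s) ^ 3) ^ 2) * (K / s)
        + ((I + s) ^ 3)⁻¹ * ((-(2 * b) / s) / s ^ 2))
      - (-(3 * (I + s) ^ 2 * (K / s)) / ((I + s) ^ 3) ^ 2) ^ 2
      = 6 * b / (s ^ 3 * (I + s) ^ 7) := by
    field_simp
    ring
  rw [key]
  positivity
end

section
/- Let b > 0, I > 0 and K ≠ 0 with K² > 2b. For H₀(I,K) = −1/(2(I + √(K²−2b))²), set ω_I = ∂H₀/∂I and ω_K = ∂H₀/∂K. Then ω_I²·∂²H₀/∂K² − 2ω_Iω_K·∂²H₀/∂I∂K + ω_K²·∂²H₀/∂I² = −2b/((K²−2b)^{3/2}·(I + √(K²−2b))⁹); in particular this expression is nonzero. -/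
private lemma keyA (u : ℝ → ℝ) (u' x : ℝ) (hu : HasDerivAt u u' x) (h : u x ≠ 0) :
    HasDerivAt (fun y => -1/(2*(u y)^2)) (u'/(u x)^3) x := by
  have h1 : HasDerivAt (fun y => 2*(u y)^2) (2*(((2:ℕ):ℝ)*(u x)^1*u')) x :=
    (hu.pow 2).const_mul 2
  have h2 : 2*(u x)^2 ≠ 0 := mul_ne_zero two_ne_zero (pow_ne_zero 2 h)
  have h3 := (h1.inv h2).neg
  have he : (fun y => -1/(2*(u y)^2)) = fun y => -(2*(u y)^2)⁻¹ := by
    funext y; rw [neg_div, one_div]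
  rw [he]
  refine h3.congr_deriv ?_
  field_simp
  ring

private lemma keyB (u : ℝ → ℝ) (u' x : ℝ) (hu : HasDerivAt u u' x) (h : u x ≠ 0) :
    HasDerivAt (fun y => 1/(u y)^3) (-3*u'/(u x)^4) x := by
  have h1 : HasDerivAt (fun y => (u y)^3) (((3:ℕ):ℝ)*(u x)^2*u') x := hu.pow 3
  have h2 : (u x)^3 ≠ 0 := pow_ne_zero 3 h
  have h3 := h1.inv h2
  have he : (fun y => 1/(u y)^3) = fun y => ((u y)^3)⁻¹ := by
    funext y; rw [one_div]
  rw [he]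
  refine h3.congr_deriv ?_
  field_simp
  ring

private lemma keyG (b x : ℝ) (hx : 2*b < x^2) :
    HasDerivAt (fun y => Real.sqrt (y^2 - 2*b)) (x / Real.sqrt (x^2 - 2*b)) x := by
  have h0 : x^2 - 2*b ≠ 0 := by linarith
  have hs : 0 < Real.sqrt (x^2 - 2*b) := Real.sqrt_pos.mpr (by linarith)
  have h1 : HasDerivAt (fun y : ℝ => y^2 - 2*b) (2*x) x := by
    simpa using ((hasDerivAt_pow 2 x).sub_const (2*b))
  have h2 := (Real.hasDerivAt_sqrt h0).comp x h1
  refine h2.congr_deriv ?_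
  field_simp

/-- Condition (19) of the nonintegrability proof: for the isotropic Manev
Hamiltonian `H₀(I,K) = −1/(2(I + √(K²−2b))²)` with frequencies
`ω_I = ∂H₀/∂I` and `ω_K = ∂H₀/∂K`, the quadratic combination
`ω_I²∂²H₀/∂K² − 2ω_Iω_K∂²H₀/∂I∂K + ω_K²∂²H₀/∂I²` equals
`−2b/((K²−2b)^{3/2}(I+√(K²−2b))⁹)` and is therefore nonzero. -/
theorem manev_condition19 (b I K : ℝ) (hb : 0 < b) (hI : 0 < I)
    (hKne : K ≠ 0) (hK : 2 * b < K ^ 2)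
    (H0 : ℝ → ℝ → ℝ)
    (hH0 : ∀ I' K' : ℝ, H0 I' K' = -1 / (2 * (I' + Real.sqrt (K' ^ 2 - 2 * b)) ^ 2))
    (ωI ωK HII HKK HIK : ℝ)
    (hωI : ωI = deriv (fun I' => H0 I' K) I)
    (hωK : ωK = deriv (fun K' => H0 I K') K)
    (hHII : HII = deriv (fun I' => deriv (fun I'' => H0 I'' K) I') I)
    (hHKK : HKK = deriv (fun K' => deriv (fun K'' => H0 I K'') K') K)
    (hHIK : HIK = deriv (fun K' => deriv (fun I' => H0 I' K') I) K) :
    ωI ^ 2 * HKK - 2 * ωI * ωK * HIK + ωK ^ 2 * HII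
      = -2 * b / ((Real.sqrt (K ^ 2 - 2 * b)) ^ 3
          * (I + Real.sqrt (K ^ 2 - 2 * b)) ^ 9) ∧
    ωI ^ 2 * HKK - 2 * ωI * ωK * HIK + ωK ^ 2 * HII ≠ 0 := by
  set g : ℝ → ℝ := fun x => Real.sqrt (x^2 - 2*b) with hg
  set s : ℝ := Real.sqrt (K^2 - 2*b) with hsdef
  have hsg : g K = s := rfl
  have hs : 0 < s := Real.sqrt_pos.mpr (by linarith)
  have hs2 : s^2 = K^2 - 2*b := Real.sq_sqrt (by linarith)
  set u : ℝ := I + s with hudef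
  have hu : 0 < u := by positivity
  -- g K' ≥ 0 always
  have hgnn : ∀ x, 0 ≤ g x := fun x => Real.sqrt_nonneg _
  -- ∂H0/∂I at any (x, K') with x + g K' ≠ 0
  have dI : ∀ (K' x : ℝ), 0 < x → deriv (fun I' => H0 I' K') x = 1/(x + g K')^3 := by
    intro K' x hx
    have hne : x + g K' ≠ 0 := by have := hgnn K'; positivity
    have h1 : HasDerivAt (fun I' : ℝ => I' + g K') 1 x := (hasDerivAt_id x).add_const _
    have h2 := keyA _ _ _ h1 hne
    have he : (fun I' => H0 I' K') = fun I' => -1/(2*(I' + g K')^2) := by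
      funext I'; rw [hH0]
    rw [he, h2.deriv]
  -- ωI
  have hωI' : ωI = 1/u^3 := by rw [hωI, dI K I hI]
  -- ∂H0/∂K at points x with 2b < x²
  have dK : ∀ x : ℝ, 2*b < x^2 →
      deriv (fun K' => H0 I K') x = (x / g x)/(I + g x)^3 := by
    intro x hx
    have hne : I + g x ≠ 0 := by have := hgnn x; positivity
    have h1 : HasDerivAt (fun K' : ℝ => I + g K') (x / g x) x := (keyG b x hx).const_add I
    have h2 := keyA _ _ _ h1 hne
    have he : (fun K' => H0 I K') = fun K' => -1/(2*(I + g K')^2) := by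
      funext K'; rw [hH0]
    rw [he, h2.deriv]
  -- ωK
  have hωK' : ωK = K/(s*u^3) := by
    rw [hωK, dK K hK]
    rw [hsg]
    field_simp
    rfl
  -- HII : inner derivative equals 1/(x+s)^3 near I
  have hII' : HII = -3/u^4 := by
    have hev : (fun I' => deriv (fun I'' => H0 I'' K) I') =ᶠ[nhds I]
        (fun I' => 1/(I' + s)^3) := by
      filter_upwards [Ioi_mem_nhds (show (0:ℝ) < I from hI)] with x hx
      exact dI K x hx
    rw [hHII, hev.deriv_eq]
    have h1 : HasDerivAt (fun I' : ℝ => I' + s) 1 I := (hasDerivAt_id I).add_const _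
    have h2 := keyB _ _ _ h1 (by positivity)
    rw [h2.deriv]
    field_simp
    rfl
  -- HIK : inner derivative over I' equals 1/(I + g K')^3 for ALL K'
  have hIK' : HIK = -3*K/(s*u^4) := by
    have he : (fun K' => deriv (fun I' => H0 I' K') I) = fun K' => 1/(I + g K')^3 := by
      funext K'; exact dI K' I hI
    rw [hHIK, he]
    have h1 : HasDerivAt (fun K' : ℝ => I + g K') (K / g K) K := (keyG b K hK).const_add I
    have h2 := keyB _ _ _ h1 (by rw [hsg]; positivity)
    rw [h2.deriv, hsg]
    field_simp
    try ring
  -- HKK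
  have hKK' : HKK = 1/(s*u^3) - K^2/(s^3*u^3) - 3*K^2/(s^2*u^4) := by
    have hopen : {x : ℝ | 2*b < x^2} ∈ nhds K := by
      have : IsOpen {x : ℝ | 2*b < x^2} :=
        isOpen_lt continuous_const (continuous_pow 2)
      exact this.mem_nhds hK
    have hev : (fun K' => deriv (fun K'' => H0 I K'') K') =ᶠ[nhds K]
        (fun K' => (K' / g K')/(I + g K')^3) := by
      filter_upwards [hopen] with x hx
      exact dK x hx
    rw [hHKK, hev.deriv_eq]
    -- derivative of x ↦ (x / g x)/(I + g x)^3 at K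
    have hgne : g K ≠ 0 := by rw [hsg]; positivity
    have hune : I + g K ≠ 0 := by rw [hsg]; positivity
    have hnum : HasDerivAt (fun x : ℝ => x / g x)
        ((1 * g K - K * (K / g K)) / (g K)^2) K :=
      (hasDerivAt_id K).div (keyG b K hK) hgne
    have hden : HasDerivAt (fun x : ℝ => (I + g x)^3)
        (((3:ℕ):ℝ) * (I + g K)^2 * (K / g K)) K :=
      ((keyG b K hK).const_add I).pow 3
    have h2 := hnum.div hden (pow_ne_zero 3 hune)
    rw [show (fun K' => K' / g K' / (I + g K')^3) = ((fun x => x / g x) / fun x => (I + g x)^3) from rfl, h2.deriv, hsg]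
    rw [hsg] at *
    field_simp
    ring
  -- final computation
  have hmain : ωI ^ 2 * HKK - 2 * ωI * ωK * HIK + ωK ^ 2 * HII
      = 1/(s*u^9) - K^2/(s^3*u^9) := by
    rw [hωI', hωK', hII', hIK', hKK']
    field_simp
    ring
  have hfin : (1:ℝ)/(s*u^9) - K^2/(s^3*u^9) = -2*b/(s^3*u^9) := by
    rw [show (-2:ℝ)*b = s^2 - K^2 by rw [hs2]; ring]
    field_simp
  have heq : ωI ^ 2 * HKK - 2 * ωI * ωK * HIK + ωK ^ 2 * HII = -2*b/(s^3*u^9) := by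
    rw [hmain, hfin]
  constructor
  · exact heq
  · rw [heq]
    have : (0:ℝ) < 2*b/(s^3*u^9) := by positivity
    rw [neg_mul, neg_div]
    linarith
end

section
/- Let 0 < e < 1 and let g : ℝ → ℝ be the inverse of the bijection η ↦ η − e sin η. Then for every integer l, ∫₀^{2π} cos(l·M)/(1 − e·cos(g(M))) dM = ∫₀^{2π} cos(l(η − e sin η)) dη. Equivalently, with the Bessel function defined by J_l(z) = (1/2π)∫₀^{2π} cos(l·u − z·sin u) du, the l-th Fourier cosine coefficient (1/π)∫₀^{2π} (1 − e cos g(M))^{-1} cos(lM) dM equals 2·J_l(l·e). -/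
open Real intervalIntegral

/-- The Fourier cosine coefficients of `A/r = (1 − e cos η)⁻¹`, regarded as a
`2π`-periodic function of the mean anomaly `M = η − e sin η`, are expressed
by Bessel functions: the substitution `M = η − e sin η` gives
`∫₀^{2π} cos(lM)/(1 − e cos g(M)) dM = ∫₀^{2π} cos(l(η − e sin η)) dη`, and
hence the `l`-th cosine coefficient equals `2 J_l(le)` with
`J_l(z) = (1/2π)∫₀^{2π} cos(lu − z sin u) du`. -/
theorem manev_fourier_bessel (e : ℝ) (he : 0 < e) (he1 : e < 1)
    (g : ℝ → ℝ)
    (hgl : ∀ η : ℝ, g (η - e * Real.sin η) = η)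
    (hgr : ∀ M : ℝ, g M - e * Real.sin (g M) = M) :
    ∀ l : ℤ,
      (∫ M in (0 : ℝ)..(2 * Real.pi),
          Real.cos ((l : ℝ) * M) / (1 - e * Real.cos (g M)))
        = (∫ η in (0 : ℝ)..(2 * Real.pi),
            Real.cos ((l : ℝ) * (η - e * Real.sin η))) ∧
      (1 / Real.pi) * ∫ M in (0 : ℝ)..(2 * Real.pi),
          Real.cos ((l : ℝ) * M) / (1 - e * Real.cos (g M))
        = 2 * ((1 / (2 * Real.pi)) * ∫ u in (0 : ℝ)..(2 * Real.pi),
            Real.cos ((l : ℝ) * u - (l : ℝ) * e * Real.sin u)) := by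
  have hpos : ∀ x : ℝ, 0 < 1 - e * Real.cos x := by
    intro x
    nlinarith [Real.cos_le_one x, Real.neg_one_le_cos x]
  set φ : ℝ → ℝ := fun η => η - e * Real.sin η with hφ
  have hderiv : ∀ x : ℝ, HasDerivAt φ (1 - e * Real.cos x) x := by
    intro x
    exact (hasDerivAt_id' x).sub ((Real.hasDerivAt_sin x).const_mul e)
  have hφmono : StrictMono φ := by
    apply strictMono_of_deriv_pos
    intro x
    rw [(hderiv x).deriv]
    exact hpos x
  have hgmono : StrictMono g := by
    intro a b hab
    by_contra h
    push_neg at h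
    rcases eq_or_lt_of_le h with h' | h'
    · have := congrArg φ h'
      simp only [hφ] at this
      rw [hgr, hgr] at this
      exact hab.ne' this
    · have := hφmono h'
      simp only [hφ] at this
      rw [hgr, hgr] at this
      exact absurd this (not_lt.mpr hab.le)
  have hgsurj : Function.Surjective g := fun η => ⟨φ η, hgl η⟩
  have hgcont : Continuous g :=
    ((StrictMono.orderIsoOfSurjective g hgmono hgsurj).continuous :)
  intro l
  have hF : ∀ l : ℤ, Continuous fun M => Real.cos ((l : ℝ) * M) / (1 - e * Real.cos (g M)) := by
    intro l
    exact (Real.continuous_cos.comp (continuous_const.mul continuous_id)).div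
      (continuous_const.sub (continuous_const.mul (Real.continuous_cos.comp hgcont)))
      (fun x => (hpos (g x)).ne')
  have key : (∫ M in (0 : ℝ)..(2 * Real.pi),
      Real.cos ((l : ℝ) * M) / (1 - e * Real.cos (g M)))
      = (∫ η in (0 : ℝ)..(2 * Real.pi), Real.cos ((l : ℝ) * (η - e * Real.sin η))) := by
    have hsub := intervalIntegral.integral_comp_smul_deriv
      (f := φ) (f' := fun x => 1 - e * Real.cos x)
      (g := fun M => Real.cos ((l : ℝ) * M) / (1 - e * Real.cos (g M)))
      (a := 0) (b := 2 * Real.pi)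
      (fun x _ => hderiv x)
      ((continuous_const.sub (continuous_const.mul Real.continuous_cos)).continuousOn)
      (hF l)
    have hφ0 : φ 0 = 0 := by simp [hφ]
    have hφ2 : φ (2 * Real.pi) = 2 * Real.pi := by simp [hφ, Real.sin_two_pi]
    rw [hφ0, hφ2] at hsub
    rw [← hsub]
    apply intervalIntegral.integral_congr
    intro x _
    simp only [Function.comp, hφ, smul_eq_mul, hgl x]
    rw [mul_comm, div_mul_cancel₀ _ (hpos x).ne']
  refine ⟨key, ?_⟩
  rw [key]
  have h2 : (∫ η in (0 : ℝ)..(2 * Real.pi), Real.cos ((l : ℝ) * (η - e * Real.sin η)))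
      = (∫ u in (0 : ℝ)..(2 * Real.pi), Real.cos ((l : ℝ) * u - (l : ℝ) * e * Real.sin u)) := by
    apply intervalIntegral.integral_congr
    intro x _
    ring_nf
  rw [h2]
  have hπ : Real.pi ≠ 0 := Real.pi_ne_zero
  field_simp
end
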